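/- arXiv:2004.13129 — 6 statements merged into one kernel-verified Lean document; each statement's English description precedes it below -/
import Mathlib

section
/- Let n ≥ 1 be an integer and let M ⊂ ℝ^{n+1} be a set of locally finite n-dimensional Hausdorff measure. Then the set D := { x ∈ M : there exists R_x > 0 such that μH[n](M ∩ ∂B_{R_x}(x)) > 0 } is at most countable, where ∂B_R(x) := {y ∈ ℝ^{n+1} : |y − x| = R}. -/
open MeasureTheory Set Metric
open scoped RealInnerProductSpace

/-!
Two spheres with distinct centres meet inside a hyperplane, where they cut out a sphere of an
`n`-dimensional affine subspace; hence their intersection is `μH[n]`-null. The spheres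
`∂B_{R_x}(x)`, `x ∈ D`, are therefore pairwise almost disjoint sets of positive measure for the
σ-finite measure `μH[n]` restricted to `M`, and there can be only countably many of them.
-/

section Spheres

variable {E : Type*} [NormedAddCommGroup E] [InnerProductSpace ℝ E]

theorem inner_sub_eq_of_mem_sphere_inter_sphere {x y z : E} {R R' : ℝ}
    (hz : z ∈ sphere x R ∩ sphere y R') :
    ⟪z - x, y - x⟫ = (R ^ 2 - R' ^ 2 + ‖y - x‖ ^ 2) / 2 := by
  obtain ⟨hzx, hzy⟩ := hz
  rw [mem_sphere, dist_eq_norm] at hzx hzy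
  have hexpand : ‖z - y‖ ^ 2 = ‖z - x‖ ^ 2 - 2 * ⟪z - x, y - x⟫ + ‖y - x‖ ^ 2 := by
    rw [← norm_sub_sq_real, sub_sub_sub_cancel_right]
  rw [hzx, hzy] at hexpand
  linarith

theorem exists_sphere_of_sphere_inter_hyperplane {v : E} (hv : v ≠ 0) (x : E) (R c : ℝ) :
    ∃ (p : E) (r : ℝ),
      sphere x R ∩ {z | ⟪z - x, v⟫ = c} ⊆ (fun w : (ℝ ∙ v)ᗮ => p + w) '' sphere 0 r := by
  -- `p` is the foot of the perpendicular from `x` to the hyperplane.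
  set p := x + (c / ‖v‖ ^ 2) • v
  have hv2 : ‖v‖ ^ 2 ≠ 0 := by positivity
  refine ⟨p, √(R ^ 2 - ‖p - x‖ ^ 2), ?_⟩
  rintro z ⟨hzx, hzc⟩
  have hpx : p - x = (c / ‖v‖ ^ 2) • v := add_sub_cancel_left _ _
  have horth : ⟪z - p, v⟫ = 0 := by
    have : z - p = (z - x) - (p - x) := by abel
    rw [this, inner_sub_left, hpx, real_inner_smul_left, real_inner_self_eq_norm_sq, hzc.out]
    field_simp
    ring
  have hpyth : ‖z - x‖ ^ 2 = ‖z - p‖ ^ 2 + ‖p - x‖ ^ 2 := by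
    rw [← sub_add_sub_cancel z p x, norm_add_sq_real, hpx, real_inner_smul_right, horth]
    ring
  refine ⟨⟨z - p, Submodule.mem_orthogonal_singleton_iff_inner_right.mpr
    (by rwa [real_inner_comm])⟩, ?_, add_sub_cancel _ _⟩
  rw [mem_sphere_zero_iff_norm, Submodule.coe_norm, ← mem_sphere.mp hzx, dist_eq_norm, hpyth,
    add_sub_cancel_right, Real.sqrt_sq (norm_nonneg _)]

variable [MeasurableSpace E] [BorelSpace E]

theorem hausdorffMeasure_translate_sphere_eq_zero (W : Submodule ℝ E) [FiniteDimensional ℝ W]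
    [Nontrivial W] (p : E) (r : ℝ) :
    μH[Module.finrank ℝ W] ((fun w : W => p + w) '' sphere 0 r) = 0 := by
  have hiso : Isometry (fun w : W => p + w) :=
    (IsometryEquiv.addLeft p).isometry.comp isometry_subtype_coe
  rw [hiso.hausdorffMeasure_image (Or.inl (Nat.cast_nonneg _))]
  exact Measure.addHaar_sphere _ _ _

theorem hausdorffMeasure_sphere_inter_sphere_eq_zero {n : ℕ} (hn : 1 ≤ n)
    (hE : Module.finrank ℝ E = n + 1) {x y : E} (hxy : x ≠ y) (R R' : ℝ) :
    μH[n] (sphere x R ∩ sphere y R') = 0 := by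
  have hv : y - x ≠ 0 := sub_ne_zero.mpr hxy.symm
  have : Fact (Module.finrank ℝ E = n + 1) := ⟨hE⟩
  have : FiniteDimensional ℝ E := .of_fact_finrank_eq_succ n
  have hW : Module.finrank ℝ (ℝ ∙ (y - x))ᗮ = n := Submodule.finrank_orthogonal_span_singleton hv
  have : Nontrivial ↥(ℝ ∙ (y - x))ᗮ := Module.nontrivial_of_finrank_pos (R := ℝ) (by omega)
  obtain ⟨p, r, hsub⟩ := exists_sphere_of_sphere_inter_hyperplane hv x R
    ((R ^ 2 - R' ^ 2 + ‖y - x‖ ^ 2) / 2)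
  refine measure_mono_null (fun z hz => hsub ⟨hz.1, ?_⟩) ?_
  · exact inner_sub_eq_of_mem_sphere_inter_sphere hz
  · rw [← hW]
    exact hausdorffMeasure_translate_sphere_eq_zero _ p r

end Spheres

theorem countable_of_forall_exists_measure_sphere_pos {α : Type*} [PseudoMetricSpace α]
    [MeasurableSpace α] [OpensMeasurableSpace α] (μ : Measure α) [SFinite μ]
    (hμ : ∀ ⦃x y : α⦄, x ≠ y → ∀ R R' : ℝ, μ (sphere x R ∩ sphere y R') = 0)
    {S : Set α} (hS : ∀ x ∈ S, ∃ R, 0 < μ (sphere x R)) : S.Countable := by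
  choose R hR using hS
  have hdisj : Pairwise fun x y : S => AEDisjoint μ (sphere x (R x x.2)) (sphere y (R y y.2)) :=
    fun x y hxy => hμ (Subtype.coe_injective.ne hxy) _ _
  have hpos := Measure.countable_meas_pos_of_disjoint_iUnion₀
    (fun x : S => isClosed_sphere.measurableSet.nullMeasurableSet) hdisj
  simp only [hR, ofPred_true, countable_univ_iff] at hpos
  exact countable_coe_iff.mp hpos

/-- For a set `M ⊂ ℝ^{n+1}` of locally finite `n`-dimensional Hausdorff measure,
the set of points `x ∈ M` around which some sphere `∂B_{R_x}(x)` carries positive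
measure of `M` is at most countable. -/
theorem countable_positive_spheres
    (n : ℕ) (hn : 1 ≤ n)
    (M : Set (EuclideanSpace ℝ (Fin (n+1))))
    (hMloc : ∀ K : Set (EuclideanSpace ℝ (Fin (n+1))), IsCompact K → μH[(n:ℝ)] (M ∩ K) < ⊤) :
    Set.Countable
      {x : EuclideanSpace ℝ (Fin (n+1)) |
        x ∈ M ∧ ∃ R : ℝ, 0 < R ∧ 0 < μH[(n:ℝ)] (M ∩ sphere x R)} := by
  -- locally finite on a σ-compact space, hence σ-finite
  have : IsFiniteMeasureOnCompacts (μH[(n:ℝ)].restrict M) :=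
    ⟨fun K hK => by rw [Measure.restrict_apply hK.measurableSet, inter_comm]; exact hMloc K hK⟩
  refine countable_of_forall_exists_measure_sphere_pos (μH[(n:ℝ)].restrict M)
    (fun x y hxy R R' => Measure.absolutelyContinuous_restrict ?_) ?_
  · exact hausdorffMeasure_sphere_inter_sphere_eq_zero hn finrank_euclideanSpace_fin hxy R R'
  · rintro x ⟨-, R, -, hR⟩
    exact ⟨R, by rwa [Measure.restrict_apply isClosed_sphere.measurableSet, inter_comm]⟩
end

section
/- Let n ≥ 1 be an integer. For every open convex set Ω ⊂ ℝ^{n+1}, every x ∈ ∂Ω, and every R > 0, one has μH[n](∂Ω ∩ B_R(x)) ≤ |𝕊^n| · R^n, where |𝕊^n| is the n-dimensional Hausdorff measure of the unit sphere {z ∈ ℝ^{n+1} : |z| = 1}. -/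
open MeasureTheory Metric
open scoped RealInnerProductSpace Pointwise

/-!
The nearest-point projection onto the closed convex set `closure Ω` is 1-Lipschitz. Every point
`z ∈ ∂Ω ∩ B_R(x)` is the projection of the point where the outward normal ray at `z` (given by a
supporting hyperplane) leaves `B_R(x)`. Hence `∂Ω ∩ B_R(x)` lies in the image of the sphere
`∂B_R(x)` under a 1-Lipschitz map, and its `μH[n]` is at most `μH[n] (∂B_R(x)) = R^n |𝕊^n|`.
-/

section Projection

variable {F : Type*} [NormedAddCommGroup F] [InnerProductSpace ℝ F]

theorem norm_sub_le_of_inner_nonpos {y₁ y₂ p₁ p₂ : F}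
    (h₁ : ⟪y₁ - p₁, p₂ - p₁⟫ ≤ 0) (h₂ : ⟪y₂ - p₂, p₁ - p₂⟫ ≤ 0) :
    ‖p₁ - p₂‖ ≤ ‖y₁ - y₂‖ := by
  have key : ‖p₁ - p₂‖ ^ 2 ≤ ⟪y₁ - y₂, p₁ - p₂⟫ := by
    have expand : ⟪y₁ - y₂, p₁ - p₂⟫ - ‖p₁ - p₂‖ ^ 2
        = -⟪y₁ - p₁, p₂ - p₁⟫ - ⟪y₂ - p₂, p₁ - p₂⟫ := by
      rw [← real_inner_self_eq_norm_sq, ← inner_neg_right, neg_sub, ← inner_sub_left,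
        ← inner_sub_left]
      congr 1
      abel
    linarith
  by_cases h0 : ‖p₁ - p₂‖ = 0
  · exact h0 ▸ norm_nonneg _
  · have cs := real_inner_le_norm (y₁ - y₂) (p₁ - p₂)
    have hpos := lt_of_le_of_ne (norm_nonneg (p₁ - p₂)) (Ne.symm h0)
    nlinarith

/-- The nearest-point map onto a convex set `K`, through its variational characterization. -/
def IsMetricProjection (K : Set F) (p : F → F) : Prop :=
  ∀ u, p u ∈ K ∧ ∀ w ∈ K, ⟪u - p u, w - p u⟫ ≤ 0

theorem exists_isMetricProjection {K : Set F} (hne : K.Nonempty) (hcomplete : IsComplete K)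
    (hconv : Convex ℝ K) : ∃ p, IsMetricProjection K p := by
  choose p hpK hpmin using exists_norm_eq_iInf_of_complete_convex hne hcomplete hconv
  exact ⟨p, fun u => ⟨hpK u, (norm_eq_iInf_iff_real_inner_le_zero hconv (hpK u)).1 (hpmin u)⟩⟩

namespace IsMetricProjection

variable {K : Set F} {p : F → F}

theorem lipschitzWith_one (hp : IsMetricProjection K p) : LipschitzWith 1 p :=
  LipschitzWith.of_dist_le_mul fun y₁ y₂ => by
    simpa only [NNReal.coe_one, one_mul, dist_eq_norm] using
      norm_sub_le_of_inner_nonpos ((hp y₁).2 _ (hp y₂).1) ((hp y₂).2 _ (hp y₁).1)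

theorem apply_eq (hp : IsMetricProjection K p) {y z : F} (hz : z ∈ K)
    (h : ∀ w ∈ K, ⟪y - z, w - z⟫ ≤ 0) : p y = z := by
  have := norm_sub_le_of_inner_nonpos ((hp y).2 z hz) (h (p y) (hp y).1)
  rw [sub_self, norm_zero] at this
  exact sub_eq_zero.1 (norm_le_zero_iff.1 this)

end IsMetricProjection

end Projection

theorem exists_nonneg_add_smul_mem_sphere {E : Type*} [NormedAddCommGroup E] [NormedSpace ℝ E]
    {x z ν : E} {R : ℝ} (hz : z ∈ ball x R) (hν : ν ≠ 0) :
    ∃ t : ℝ, 0 ≤ t ∧ z + t • ν ∈ sphere x R := by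
  have hR : 0 < R := pos_of_mem_ball hz
  have hνpos : 0 < ‖ν‖ := norm_pos_iff.2 hν
  set T := 2 * R / ‖ν‖
  have hT : 0 ≤ T := by positivity
  have h0 : dist (z + (0 : ℝ) • ν) x ≤ R := by simpa using (mem_ball.1 hz).le
  have hTfar : R ≤ dist (z + T • ν) x := by
    have hTν : ‖T • ν‖ = 2 * R := by
      rw [norm_smul, Real.norm_of_nonneg hT, div_mul_cancel₀ _ hνpos.ne']
    have := norm_sub_norm_le (T • ν) (x - z)
    rw [dist_eq_norm, show z + T • ν - x = T • ν - (x - z) by abel]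
    linarith [mem_ball'.1 hz, dist_eq_norm x z]
  obtain ⟨t, ht, htR⟩ := intermediate_value_Icc hT
    (f := fun t : ℝ => dist (z + t • ν) x) (by fun_prop) ⟨h0, hTfar⟩
  exact ⟨t, ht.1, htR⟩

section Normal

variable {F : Type*} [NormedAddCommGroup F] [InnerProductSpace ℝ F] [CompleteSpace F]

theorem Convex.exists_ne_zero_inner_sub_nonpos_of_notMem {Ω : Set F} (hΩc : Convex ℝ Ω)
    (hΩo : IsOpen Ω) (hne : Ω.Nonempty) {z : F} (hz : z ∉ Ω) :
    ∃ ν ≠ 0, ∀ w ∈ closure Ω, ⟪ν, w - z⟫ ≤ 0 := by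
  obtain ⟨f, hf⟩ := geometric_hahn_banach_open_point hΩc hΩo hz
  set ν := (InnerProductSpace.toDual ℝ F).symm f
  have hν : ∀ w, ⟪ν, w⟫ = f w := fun w => InnerProductSpace.toDual_symm_apply
  have hclosure : closure Ω ⊆ {w | f w ≤ f z} :=
    closure_minimal (fun w hw => (hf w hw).le) (isClosed_le f.continuous continuous_const)
  refine ⟨ν, ?_, fun w hw => ?_⟩
  · rintro hν0
    obtain ⟨a, ha⟩ := hne
    have := hf a ha
    rw [← hν, ← hν, hν0, inner_zero_left, inner_zero_left] at this
    exact lt_irrefl _ this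
  · rw [inner_sub_right, hν, hν, sub_nonpos]
    exact hclosure hw

theorem IsMetricProjection.frontier_inter_ball_subset_image_sphere {Ω : Set F}
    (hΩo : IsOpen Ω) (hΩc : Convex ℝ Ω) {p : F → F} (hp : IsMetricProjection (closure Ω) p)
    (x : F) (R : ℝ) : frontier Ω ∩ ball x R ⊆ p '' sphere x R := by
  rintro z ⟨⟨hzK, hzΩ⟩, hzB⟩
  rw [hΩo.interior_eq] at hzΩ
  obtain ⟨ν, hν0, hν⟩ := hΩc.exists_ne_zero_inner_sub_nonpos_of_notMem hΩo
    (closure_nonempty_iff.1 ⟨z, hzK⟩) hzΩ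
  obtain ⟨t, ht, hts⟩ := exists_nonneg_add_smul_mem_sphere hzB hν0
  refine ⟨z + t • ν, hts, hp.apply_eq hzK fun w hw => ?_⟩
  rw [add_sub_cancel_left, real_inner_smul_left]
  exact mul_nonpos_of_nonneg_of_nonpos ht (hν w hw)

end Normal

theorem hausdorffMeasure_sphere {E : Type*} [NormedAddCommGroup E] [NormedSpace ℝ E]
    [MeasurableSpace E] [BorelSpace E] {d : ℝ} (hd : 0 ≤ d) (x : E) {R : ℝ} (hR : 0 < R) :
    μH[d] (sphere x R) = ENNReal.ofReal (R ^ d) * μH[d] (sphere (0 : E) 1) := by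
  have hsphere : sphere x R = x +ᵥ R • sphere (0 : E) 1 := by
    rw [smul_sphere' hR.ne', smul_zero, mul_one, vadd_sphere, vadd_eq_add, add_zero,
      Real.norm_of_nonneg hR.le]
  rw [hsphere, hausdorffMeasure_vadd _ (Or.inl hd), Measure.hausdorffMeasure_smul₀ hd hR.ne',
    ENNReal.smul_def, smul_eq_mul, ENNReal.coe_rpow_of_nonneg _ hd,
    ← ENNReal.ofReal_rpow_of_nonneg hR.le hd, ENNReal.ofReal,
    Real.toNNReal_eq_nnnorm_of_nonneg hR.le]

theorem convex_boundary_ball_measure_bound_general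
    (n : ℕ)
    (Ω : Set (EuclideanSpace ℝ (Fin (n+1))))
    (hΩo : IsOpen Ω) (hΩc : Convex ℝ Ω)
    (x : EuclideanSpace ℝ (Fin (n+1))) (hx : x ∈ frontier Ω)
    (R : ℝ) (hR : 0 < R) :
    μH[(n:ℝ)] (frontier Ω ∩ ball x R)
      ≤ μH[(n:ℝ)] (sphere (0 : EuclideanSpace ℝ (Fin (n+1))) 1) * ENNReal.ofReal (R ^ n) := by
  obtain ⟨p, hp⟩ := exists_isMetricProjection ⟨x, frontier_subset_closure hx⟩
    isClosed_closure.isComplete hΩc.closure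
  calc μH[(n:ℝ)] (frontier Ω ∩ ball x R)
      ≤ μH[(n:ℝ)] (p '' sphere x R) :=
        measure_mono (hp.frontier_inter_ball_subset_image_sphere hΩo hΩc x R)
    _ ≤ μH[(n:ℝ)] (sphere x R) := by
        simpa using hp.lipschitzWith_one.hausdorffMeasure_image_le n.cast_nonneg (sphere x R)
    _ = _ := by
        rw [hausdorffMeasure_sphere n.cast_nonneg x hR, Real.rpow_natCast, mul_comm]

/-- Perimeter bound for convex sets at all scales:
`|∂Ω ∩ B_R(x)| ≤ |𝕊^n| R^n` for every open convex `Ω ⊂ ℝ^{n+1}`, `x ∈ ∂Ω`, `R > 0`. -/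
theorem convex_boundary_ball_measure_bound
    (n : ℕ) (hn : 1 ≤ n)
    (Ω : Set (EuclideanSpace ℝ (Fin (n+1))))
    (hΩo : IsOpen Ω) (hΩc : Convex ℝ Ω)
    (x : EuclideanSpace ℝ (Fin (n+1))) (hx : x ∈ frontier Ω)
    (R : ℝ) (hR : 0 < R) :
    μH[(n:ℝ)] (frontier Ω ∩ ball x R)
      ≤ μH[(n:ℝ)] (sphere (0 : EuclideanSpace ℝ (Fin (n+1))) 1) * ENNReal.ofReal (R ^ n) :=
  convex_boundary_ball_measure_bound_general n Ω hΩo hΩc x hx R hR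
end

section
/- Let n ≥ 1 be an integer, s ∈ (0,1), and let M ⊂ ℝ^{n+1} be a Borel set such that the restriction of the n-dimensional Hausdorff measure μH[n] to M is σ-finite (for instance, M the boundary of an open convex set). Let u : M → ℝ be a μH[n]-measurable function. Then (1/2) ∫_M ∫_M |u(x) − u(y)| / |x − y|^{n+s} dx dy = ∫_{−∞}^{+∞} Per_{M,s}({x ∈ M : u(x) > t}) dt, with both sides taken in [0, +∞] and the outer integral on the right with respect to Lebesgue measure on ℝ. -/
/-!
Since `|a - b| = (a - b)⁺ + (b - a)⁺` and the kernel is symmetric, the double integral of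
`|u x - u y| K(x, y)` is twice that of `(u x - u y)⁺ K(x, y)`. By the layer-cake formula,
`(u x - u y)⁺ = ∫ 1[u y ≤ t < u x] dt`, and exchanging the `t`-integral with the double integral
(Tonelli, which is where σ-finiteness enters) turns the right-hand side into the integral over `t`
of the nonlocal perimeters of the superlevel sets `{u > t}`.
-/

open MeasureTheory Set Filter Metric
open scoped ENNReal NNReal

/-- The fractional `s`-perimeter of `F` relative to `M ⊂ ℝ^{n+1}`. -/
noncomputable def fracPerimeterIn (n : ℕ) (s : ℝ)
    (M F : Set (EuclideanSpace ℝ (Fin (n+1)))) : ℝ≥0∞ :=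
  ∫⁻ x in F, ∫⁻ y in M \ F, ENNReal.ofReal (dist x y ^ (-((n:ℝ) + s)))
    ∂μH[(n:ℝ)] ∂μH[(n:ℝ)]

open Function

lemma ENNReal.ofReal_abs_sub (a b : ℝ) :
    ENNReal.ofReal |a - b| = ENNReal.ofReal (a - b) + ENNReal.ofReal (b - a) := by
  rcases le_total b a with h | h
  · rw [abs_of_nonneg (by linarith), ENNReal.ofReal_of_nonpos (by linarith : b - a ≤ 0), add_zero]
  · rw [abs_of_nonpos (by linarith), ENNReal.ofReal_of_nonpos (by linarith : a - b ≤ 0), zero_add,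
      neg_sub]

section NonlocalPerimeter

variable {α : Type*} [MeasurableSpace α] {μ : Measure α} [SFinite μ] {K : α → α → ℝ≥0∞}
  {u : α → ℝ}

noncomputable def nonlocalPerimeter (μ : Measure α) (K : α → α → ℝ≥0∞) (F : Set α) : ℝ≥0∞ :=
  ∫⁻ x in F, ∫⁻ y in Fᶜ, K x y ∂μ ∂μ

lemma lintegral_lintegral_add_swap {g : α → α → ℝ≥0∞} (hg : Measurable (uncurry g)) :
    ∫⁻ x, ∫⁻ y, (g x y + g y x) ∂μ ∂μ = 2 * ∫⁻ x, ∫⁻ y, g x y ∂μ ∂μ := by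
  calc ∫⁻ x, ∫⁻ y, (g x y + g y x) ∂μ ∂μ
      = ∫⁻ x, ((∫⁻ y, g x y ∂μ) + ∫⁻ y, g y x ∂μ) ∂μ :=
        lintegral_congr fun x => lintegral_add_left hg.of_uncurry_left _
    _ = ∫⁻ x, ∫⁻ y, g x y ∂μ ∂μ + ∫⁻ x, ∫⁻ y, g y x ∂μ ∂μ :=
        lintegral_add_left hg.lintegral_prod_right' _
    _ = 2 * ∫⁻ x, ∫⁻ y, g x y ∂μ ∂μ := by
        rw [lintegral_lintegral_swap (f := fun x y => g y x) (hg.comp measurable_swap).aemeasurable,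
          two_mul]

lemma nonlocalPerimeter_superlevelSet (hK : Measurable (uncurry K)) (hu : Measurable u) (t : ℝ) :
    nonlocalPerimeter μ K {x | t < u x}
      = ∫⁻ p, (Ico (u p.2) (u p.1)).indicator (fun _ => K p.1 p.2) t ∂μ.prod μ := by
  have hA : MeasurableSet {x | t < u x} := measurableSet_lt measurable_const hu
  calc nonlocalPerimeter μ K {x | t < u x}
      = ∫⁻ p in {x | t < u x} ×ˢ {x | t < u x}ᶜ, uncurry K p ∂μ.prod μ := by
        rw [nonlocalPerimeter, ← Measure.prod_restrict, lintegral_prod _ hK.aemeasurable]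
        rfl
    _ = _ := by
        rw [← lintegral_indicator (hA.prod hA.compl)]
        refine lintegral_congr fun p => ?_
        by_cases h₁ : t < u p.1 <;> by_cases h₂ : u p.2 ≤ t <;>
          simp [h₁, h₂, uncurry]

lemma lintegral_nonlocalPerimeter_superlevelSet (hK : Measurable (uncurry K))
    (hu : Measurable u) :
    ∫⁻ t, nonlocalPerimeter μ K {x | t < u x}
      = ∫⁻ x, ∫⁻ y, ENNReal.ofReal (u x - u y) * K x y ∂μ ∂μ := by
  have hG : Measurable (uncurry fun (t : ℝ) (p : α × α) =>
      (Ico (u p.2) (u p.1)).indicator (fun _ => K p.1 p.2) t) := by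
    have hS : MeasurableSet {q : ℝ × α × α | u q.2.2 ≤ q.1 ∧ q.1 < u q.2.1} :=
      (measurableSet_le (hu.comp measurable_snd.snd) measurable_fst).inter
        (measurableSet_lt measurable_fst (hu.comp measurable_snd.fst))
    convert (hK.comp measurable_snd).indicator hS using 1
    ext q
    simp [indicator_apply, uncurry]
  have hf : Measurable fun p : α × α => ENNReal.ofReal (u p.1 - u p.2) * K p.1 p.2 :=
    ((hu.comp measurable_fst).sub (hu.comp measurable_snd)).ennreal_ofReal.mul hK
  simp_rw [nonlocalPerimeter_superlevelSet hK hu]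
  rw [lintegral_lintegral_swap hG.aemeasurable, ← lintegral_prod _ hf.aemeasurable]
  refine lintegral_congr fun p => ?_
  rw [lintegral_indicator_const measurableSet_Ico, Real.volume_Ico, mul_comm]

theorem lintegral_lintegral_ofReal_abs_sub_mul (hK : Measurable (uncurry K))
    (hK_symm : ∀ x y, K x y = K y x) (hu : Measurable u) :
    ∫⁻ x, ∫⁻ y, ENNReal.ofReal |u x - u y| * K x y ∂μ ∂μ
      = 2 * ∫⁻ t, nonlocalPerimeter μ K {x | t < u x} := by
  have hg : Measurable (uncurry fun x y => ENNReal.ofReal (u x - u y) * K x y) :=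
    ((hu.comp measurable_fst).sub (hu.comp measurable_snd)).ennreal_ofReal.mul hK
  rw [lintegral_nonlocalPerimeter_superlevelSet hK hu, ← lintegral_lintegral_add_swap hg]
  simp_rw [ENNReal.ofReal_abs_sub, add_mul, hK_symm]

end NonlocalPerimeter

lemma fracPerimeterIn_inter (n : ℕ) (s : ℝ) (M : Set (EuclideanSpace ℝ (Fin (n+1))))
    {G : Set (EuclideanSpace ℝ (Fin (n+1)))} (hG : MeasurableSet G) :
    fracPerimeterIn n s M (M ∩ G)
      = nonlocalPerimeter (μH[(n:ℝ)].restrict M)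
          (fun x y => ENNReal.ofReal (dist x y ^ (-((n:ℝ) + s)))) G := by
  rw [fracPerimeterIn, nonlocalPerimeter, Set.sdiff_self_inter, sdiff_eq,
    Measure.restrict_restrict hG, Measure.restrict_restrict hG.compl, inter_comm M, inter_comm M]

theorem fractional_coarea_formula_general
    (n : ℕ) (s : ℝ)
    (M : Set (EuclideanSpace ℝ (Fin (n+1))))
    (hσfin : SigmaFinite (μH[(n:ℝ)].restrict M))
    (u : EuclideanSpace ℝ (Fin (n+1)) → ℝ) (hu : Measurable u) :
    (1/2) * ∫⁻ x in M, ∫⁻ y in M,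
        ENNReal.ofReal (|u x - u y| / dist x y ^ ((n:ℝ) + s)) ∂μH[(n:ℝ)] ∂μH[(n:ℝ)]
      = ∫⁻ t : ℝ, fracPerimeterIn n s M {x | x ∈ M ∧ u x > t} ∂volume := by
  have hK : Measurable (uncurry fun x y : EuclideanSpace ℝ (Fin (n+1)) =>
      ENNReal.ofReal (dist x y ^ (-((n:ℝ) + s)))) :=
    (measurable_fst.dist measurable_snd).pow_const _ |>.ennreal_ofReal
  have h_integrand : ∀ x y : EuclideanSpace ℝ (Fin (n+1)),
      ENNReal.ofReal (|u x - u y| / dist x y ^ ((n:ℝ) + s))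
        = ENNReal.ofReal |u x - u y| * ENNReal.ofReal (dist x y ^ (-((n:ℝ) + s))) := by
    intro x y
    rw [Real.rpow_neg dist_nonneg, div_eq_mul_inv, ENNReal.ofReal_mul (abs_nonneg _)]
  have h_perimeter (t : ℝ) : fracPerimeterIn n s M {x | x ∈ M ∧ u x > t}
      = nonlocalPerimeter (μH[(n:ℝ)].restrict M)
          (fun x y => ENNReal.ofReal (dist x y ^ (-((n:ℝ) + s)))) {x | t < u x} :=
    fracPerimeterIn_inter n s M (measurableSet_lt measurable_const hu)
  simp_rw [h_integrand, h_perimeter]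
  rw [lintegral_lintegral_ofReal_abs_sub_mul hK (fun x y => by rw [dist_comm]) hu, ← mul_assoc,
    one_div, ENNReal.inv_mul_cancel two_ne_zero ENNReal.ofNat_ne_top, one_mul]

/-- Fractional coarea formula on hypersurfaces of `ℝ^{n+1}`. -/
theorem fractional_coarea_formula
    (n : ℕ) (hn : 1 ≤ n) (s : ℝ) (hs : s ∈ Set.Ioo (0:ℝ) 1)
    (M : Set (EuclideanSpace ℝ (Fin (n+1)))) (hM : MeasurableSet M)
    (hσfin : SigmaFinite (μH[(n:ℝ)].restrict M))
    (u : EuclideanSpace ℝ (Fin (n+1)) → ℝ) (hu : Measurable u) :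
    (1/2) * ∫⁻ x in M, ∫⁻ y in M,
        ENNReal.ofReal (|u x - u y| / dist x y ^ ((n:ℝ) + s)) ∂μH[(n:ℝ)] ∂μH[(n:ℝ)]
      = ∫⁻ t : ℝ, fracPerimeterIn n s M {x | x ∈ M ∧ u x > t} ∂volume :=
  fractional_coarea_formula_general n s M hσfin u hu
end

section
/- Let n ≥ 1 be an integer, s ∈ (0,1), p ≥ 1 with sp < n, and N ∈ ℤ. Let (a_i)_{i∈ℤ} be a bounded, non-negative, non-increasing sequence of real numbers (a_{i+1} ≤ a_i for all i) with a_i = 0 for all i ≥ N. Then Σ_{i∈ℤ} 2^{pi} a_i^{(n−sp)/n} ≤ 2^{p*_s} · Σ_{i∈ℤ, a_i ≠ 0} 2^{pi} a_i^{−sp/n} a_{i+1}, where p*_s := np/(n − sp); both series converge. -/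
/-!
With `β = (n - sp)/n` and `θ = sp/n`, so that `β + θ = 1`, put `f_i = 2^{pi} a_i^β` and
`g_i = 2^{pi} a_i^{-θ} a_{i+1}`. Then `f_{i+1} = 2^p g_i^β f_i^θ` for every `i`, and summing with
Hölder's inequality for the exponents `1/β`, `1/θ` gives `Σ f ≤ 2^p (Σ g)^β (Σ f)^θ`. Since `Σ f`
is finite (geometric decay as `i → -∞`, vanishing for `i ≥ N`), the factor `(Σ f)^θ` can be
absorbed, leaving `Σ f ≤ 2^{p/β} Σ g`, and `p/β = p*_s`.
-/

open Real

theorem summable_and_tsum_rpow_mul_rpow_le {ι : Type*} {f g : ι → ℝ} {β θ : ℝ}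
    (hβ : 0 < β) (hθ : 0 < θ) (hβθ : β + θ = 1) (hf : ∀ i, 0 ≤ f i) (hg : ∀ i, 0 ≤ g i)
    (hf_sum : Summable f) (hg_sum : Summable g) :
    Summable (fun i => f i ^ β * g i ^ θ) ∧
      ∑' i, f i ^ β * g i ^ θ ≤ (∑' i, f i) ^ β * (∑' i, g i) ^ θ := by
  have hpq : β⁻¹.HolderConjugate θ⁻¹ :=
    Real.holderConjugate_iff.2 ⟨one_lt_inv₀ hβ |>.2 (by linarith), by simpa using hβθ⟩
  have hf' : ∀ i, (f i ^ β) ^ β⁻¹ = f i := fun i => rpow_rpow_inv (hf i) hβ.ne'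
  have hg' : ∀ i, (g i ^ θ) ^ θ⁻¹ = g i := fun i => rpow_rpow_inv (hg i) hθ.ne'
  have := summable_and_inner_le_Lp_mul_Lq_tsum_of_nonneg hpq
    (fun i => rpow_nonneg (hf i) β) (fun i => rpow_nonneg (hg i) θ)
    (by simpa only [hf'] using hf_sum) (by simpa only [hg'] using hg_sum)
  simpa only [hf', hg', one_div, inv_inv] using this

theorem le_rpow_inv_mul_of_le_mul_rpow_mul_rpow {S R c β θ : ℝ} (hS : 0 ≤ S) (hR : 0 ≤ R)
    (hc : 0 ≤ c) (hβ : 0 < β) (hβθ : β + θ = 1) (h : S ≤ c * (R ^ β * S ^ θ)) :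
    S ≤ c ^ β⁻¹ * R := by
  rcases hS.eq_or_lt with rfl | hS
  · positivity
  have hSθ : 0 < S ^ θ := rpow_pos_of_pos hS θ
  have hSβ : S ^ β ≤ c * R ^ β := by
    refine le_of_mul_le_mul_right ?_ hSθ
    calc S ^ β * S ^ θ = S := by rw [← rpow_add hS, hβθ, rpow_one]
      _ ≤ c * R ^ β * S ^ θ := by rwa [mul_assoc]
  calc S = (S ^ β) ^ β⁻¹ := (rpow_rpow_inv hS.le hβ.ne').symm
    _ ≤ (c * R ^ β) ^ β⁻¹ := by gcongr
    _ = c ^ β⁻¹ * R := by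
      rw [mul_rpow hc (rpow_nonneg hR β), rpow_rpow_inv hR hβ.ne']

theorem tsum_le_rpow_inv_mul_tsum_of_succ_le {f g : ℤ → ℝ} {c β θ : ℝ}
    (hc : 0 ≤ c) (hβ : 0 < β) (hθ : 0 < θ) (hβθ : β + θ = 1) (hf : ∀ i, 0 ≤ f i)
    (hg : ∀ i, 0 ≤ g i) (hf_sum : Summable f) (hg_sum : Summable g)
    (hsucc : ∀ i, f (i + 1) ≤ c * (g i ^ β * f i ^ θ)) :
    ∑' i, f i ≤ c ^ β⁻¹ * ∑' i, g i := by
  obtain ⟨hprod_sum, hholder⟩ := summable_and_tsum_rpow_mul_rpow_le hβ hθ hβθ hg hf hg_sum hf_sum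
  refine le_rpow_inv_mul_of_le_mul_rpow_mul_rpow (tsum_nonneg hf) (tsum_nonneg hg) hc hβ hβθ ?_
  calc ∑' i, f i = ∑' i, f (i + 1) := ((Equiv.addRight 1).tsum_eq f).symm
    _ ≤ ∑' i, c * (g i ^ β * f i ^ θ) :=
      Summable.tsum_le_tsum hsucc ((Equiv.addRight 1).summable_iff.2 hf_sum) (hprod_sum.mul_left c)
    _ = c * ∑' i, g i ^ β * f i ^ θ := tsum_mul_left
    _ ≤ c * ((∑' i, g i) ^ β * (∑' i, f i) ^ θ) := by gcongr

theorem summable_int_of_le_zpow {f : ℤ → ℝ} {C r : ℝ} {N : ℤ} (hr : 1 < r)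
    (hf : ∀ i, 0 ≤ f i) (hle : ∀ i, f i ≤ C * r ^ i) (hN : ∀ i, N ≤ i → f i = 0) :
    Summable f := by
  refine Summable.of_nat_of_neg ?_ ?_
  · refine summable_of_ne_finset_zero (s := Finset.range N.toNat) fun k hk => hN k ?_
    have : N.toNat ≤ k := by simpa using hk
    omega
  · have hgeom : Summable fun k : ℕ => C * r⁻¹ ^ k :=
      (summable_geometric_of_lt_one (by positivity) (inv_lt_one_of_one_lt₀ hr)).mul_left C
    refine Summable.of_nonneg_of_le (fun k => hf _) (fun k => ?_) hgeom
    simpa [zpow_neg, inv_pow] using hle (-k)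

theorem mul_rpow_neg_mul_rpow_mul_mul_rpow {x u v β θ : ℝ} (hx : 0 ≤ x) (hu : 0 < u)
    (hv : 0 ≤ v) (hβθ : β + θ = 1) :
    (x * u ^ (-θ) * v) ^ β * (x * u ^ β) ^ θ = x * v ^ β := by
  have hu' := rpow_nonneg hu.le
  rw [mul_rpow (mul_nonneg hx (hu' _)) hv, mul_rpow hx (hu' _), mul_rpow hx (hu' _),
    ← rpow_mul hu.le, ← rpow_mul hu.le]
  calc x ^ β * u ^ (-θ * β) * v ^ β * (x ^ θ * u ^ (β * θ))
      = x ^ β * x ^ θ * (u ^ (-θ * β) * u ^ (β * θ)) * v ^ β := by ring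
    _ = x * v ^ β := by
      rw [← rpow_add' hx (by linarith), hβθ, rpow_one, ← rpow_add hu, neg_mul, mul_comm θ,
        neg_add_cancel, rpow_zero, mul_one]

section

variable {a : ℤ → ℝ} {p β θ : ℝ}

theorem summable_two_rpow_mul_rpow (hp : 0 < p) (hβ : 0 < β) {N : ℤ}
    (hbdd : ∃ B : ℝ, ∀ i : ℤ, a i ≤ B) (hnonneg : ∀ i, 0 ≤ a i)
    (hvanish : ∀ i, N ≤ i → a i = 0) :
    Summable fun i : ℤ => (2:ℝ) ^ (p * (i:ℝ)) * a i ^ β := by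
  obtain ⟨B, hB⟩ := hbdd
  refine summable_int_of_le_zpow (C := max B 0 ^ β) (N := N) (one_lt_rpow one_lt_two hp)
    (fun i => by have := hnonneg i; positivity) (fun i => ?_) (fun i hi => ?_)
  · rw [rpow_mul zero_le_two, rpow_intCast, mul_comm]
    gcongr
    · exact hnonneg i
    · exact (hB i).trans (le_max_left B 0)
  · rw [hvanish i hi, zero_rpow hβ.ne', mul_zero]

theorem ite_two_rpow_mul_rpow_neg_mul_le (hnonneg : ∀ i, 0 ≤ a i)
    (hmono : ∀ i, a (i + 1) ≤ a i) (hβθ : β + θ = 1) (i : ℤ) :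
    (if a i ≠ 0 then (2:ℝ) ^ (p * (i:ℝ)) * a i ^ (-θ) * a (i + 1) else 0)
      ≤ (2:ℝ) ^ (p * (i:ℝ)) * a i ^ β := by
  have hai := hnonneg i
  split_ifs with h
  · have hpos : 0 < a i := hai.lt_of_ne' h
    rw [mul_assoc]
    gcongr
    calc a i ^ (-θ) * a (i + 1) ≤ a i ^ (-θ) * a i := by gcongr; exact hmono i
      _ = a i ^ β := by rw [← rpow_add_one hpos.ne', ← hβθ]; ring_nf
  · positivity

theorem two_rpow_succ_mul_rpow_le (hnonneg : ∀ i, 0 ≤ a i)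
    (hmono : ∀ i, a (i + 1) ≤ a i) (hβ : 0 < β) (hβθ : β + θ = 1) (i : ℤ) :
    (2:ℝ) ^ (p * ((i + 1 : ℤ) : ℝ)) * a (i + 1) ^ β
      ≤ (2:ℝ) ^ p * ((if a i ≠ 0 then (2:ℝ) ^ (p * (i:ℝ)) * a i ^ (-θ) * a (i + 1) else 0) ^ β
          * ((2:ℝ) ^ (p * (i:ℝ)) * a i ^ β) ^ θ) := by
  by_cases h : a i = 0
  · have hsucc : a (i + 1) = 0 := le_antisymm (h ▸ hmono i) (hnonneg (i + 1))
    simp [h, hsucc, zero_rpow hβ.ne']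
  · rw [if_pos h, mul_rpow_neg_mul_rpow_mul_mul_rpow (by positivity) ((hnonneg i).lt_of_ne' h)
      (hnonneg (i + 1)) hβθ, Int.cast_add, Int.cast_one, mul_add_one, rpow_add two_pos]
    exact le_of_eq (by ring)

end

theorem discrete_sum_lemma_general
    (n : ℕ) (s p : ℝ) (hs : s ∈ Set.Ioo (0:ℝ) 1) (hp : 1 ≤ p)
    (hsp : s * p < n) (N : ℤ) (a : ℤ → ℝ)
    (hbdd : ∃ B : ℝ, ∀ i : ℤ, a i ≤ B)
    (hnonneg : ∀ i : ℤ, 0 ≤ a i)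
    (hmono : ∀ i : ℤ, a (i + 1) ≤ a i)
    (hvanish : ∀ i : ℤ, N ≤ i → a i = 0) :
    Summable (fun i : ℤ => (2:ℝ) ^ (p * (i:ℝ)) * a i ^ (((n:ℝ) - s * p) / (n:ℝ)))
    ∧ Summable (fun i : ℤ =>
        if a i ≠ 0 then (2:ℝ) ^ (p * (i:ℝ)) * a i ^ (-(s * p) / (n:ℝ)) * a (i + 1) else 0)
    ∧ (∑' i : ℤ, (2:ℝ) ^ (p * (i:ℝ)) * a i ^ (((n:ℝ) - s * p) / (n:ℝ)))
        ≤ (2:ℝ) ^ ((n:ℝ) * p / ((n:ℝ) - s * p)) *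
            ∑' i : ℤ,
              if a i ≠ 0 then (2:ℝ) ^ (p * (i:ℝ)) * a i ^ (-(s * p) / (n:ℝ)) * a (i + 1)
              else 0 := by
  have hp0 : 0 < p := by linarith
  have hsp0 : 0 < s * p := mul_pos hs.1 hp0
  have hn0 : (0:ℝ) < n := hsp0.trans hsp
  have hβ : 0 < ((n:ℝ) - s * p) / n := div_pos (by linarith) hn0
  have hθ : 0 < s * p / n := div_pos hsp0 hn0
  have hβθ : ((n:ℝ) - s * p) / n + s * p / n = 1 := by field_simp; ring
  have hconst :
      (2:ℝ) ^ ((n:ℝ) * p / ((n:ℝ) - s * p)) = ((2:ℝ) ^ p) ^ (((n:ℝ) - s * p) / n)⁻¹ := by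
    rw [← rpow_mul zero_le_two, inv_div, mul_div_assoc', mul_comm]
  simp only [neg_div, hconst]
  have hf := summable_two_rpow_mul_rpow hp0 hβ hbdd hnonneg hvanish
  have hg_le := ite_two_rpow_mul_rpow_neg_mul_le (p := p) hnonneg hmono hβθ
  have hg0 (i : ℤ) :
      0 ≤ if a i ≠ 0 then (2:ℝ) ^ (p * (i:ℝ)) * a i ^ (-(s * p / n)) * a (i + 1) else 0 := by
    have := hnonneg i; have := hnonneg (i + 1)
    split_ifs <;> positivity
  have hg := Summable.of_nonneg_of_le hg0 hg_le hf
  exact ⟨hf, hg, tsum_le_rpow_inv_mul_tsum_of_succ_le (by positivity) hβ hθ hβθ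
    (fun i => by have := hnonneg i; positivity) hg0 hf hg
    (two_rpow_succ_mul_rpow_le hnonneg hmono hβ hβθ)⟩

/-- Discrete lemma (Di Nezza-Palatucci-Valdinoci): for a bounded non-negative
non-increasing sequence `(a_i)_{i∈ℤ}` vanishing for `i ≥ N`,
`Σ 2^{pi} a_i^{(n-sp)/n} ≤ 2^{p*_s} Σ_{a_i ≠ 0} 2^{pi} a_i^{-sp/n} a_{i+1}`,
and both series converge. -/
theorem discrete_sum_lemma
    (n : ℕ) (hn : 1 ≤ n) (s p : ℝ) (hs : s ∈ Set.Ioo (0:ℝ) 1) (hp : 1 ≤ p)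
    (hsp : s * p < n) (N : ℤ) (a : ℤ → ℝ)
    (hbdd : ∃ B : ℝ, ∀ i : ℤ, a i ≤ B)
    (hnonneg : ∀ i : ℤ, 0 ≤ a i)
    (hmono : ∀ i : ℤ, a (i + 1) ≤ a i)
    (hvanish : ∀ i : ℤ, N ≤ i → a i = 0) :
    Summable (fun i : ℤ => (2:ℝ) ^ (p * (i:ℝ)) * a i ^ (((n:ℝ) - s * p) / (n:ℝ)))
    ∧ Summable (fun i : ℤ =>
        if a i ≠ 0 then (2:ℝ) ^ (p * (i:ℝ)) * a i ^ (-(s * p) / (n:ℝ)) * a (i + 1) else 0)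
    ∧ (∑' i : ℤ, (2:ℝ) ^ (p * (i:ℝ)) * a i ^ (((n:ℝ) - s * p) / (n:ℝ)))
        ≤ (2:ℝ) ^ ((n:ℝ) * p / ((n:ℝ) - s * p)) *
            ∑' i : ℤ,
              if a i ≠ 0 then (2:ℝ) ^ (p * (i:ℝ)) * a i ^ (-(s * p) / (n:ℝ)) * a (i + 1)
              else 0 :=
  discrete_sum_lemma_general n s p hs hp hsp N a hbdd hnonneg hmono hvanish
end

section
/- Let n ≥ 1 be an integer, s ∈ (0,1), p ≥ 1 with sp < n, and N ∈ ℤ. Let (a_i)_{i∈ℤ} be a bounded, non-negative, non-increasing sequence of real numbers (a_{i+1} ≤ a_i for all i) with a_i = 0 for all i ≥ N. Then Σ_{i∈ℤ, a_{i−1} ≠ 0} 2^{pi} a_{i−1}^{−sp/n} a_{i+1} ≤ (1/2) · Σ_{i∈ℤ, a_{i−1} ≠ 0} 2^{pi} a_{i−1}^{−sp/n} a_i; both series converge. -/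
/-!
Write `c = -sp/n ≤ 0`. Since `a` is non-increasing and `c ≤ 0`, `a_{i-1}^c ≤ a_i^c` whenever
`a_i > 0`, and `2^{pi} ≤ 2^{p(i+1)} / 2` because `p ≥ 1`; so the `i`-th term of the left series
is at most half the `(i+1)`-st term of the right one. The right series converges because its terms
vanish for `i ≥ N` and are bounded by `C · 2^{pi}`, where `C = δ^c · B` with `δ` the smallest
non-zero value of `a` (attained at the last index where `a` is non-zero).
-/

noncomputable def weightedTerm (p c : ℝ) (a b : ℤ → ℝ) (i : ℤ) : ℝ :=
  if a (i - 1) ≠ 0 then (2:ℝ) ^ (p * (i:ℝ)) * a (i - 1) ^ c * b i else 0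

section weightedTerm

variable {p c : ℝ} {a b : ℤ → ℝ}

lemma weightedTerm_nonneg (ha : ∀ i, 0 ≤ a i) (hb : ∀ i, 0 ≤ b i) (i : ℤ) :
    0 ≤ weightedTerm p c a b i := by
  unfold weightedTerm
  split_ifs
  · have := ha (i - 1)
    have := hb i
    positivity
  · exact le_rfl

lemma weightedTerm_eq_zero_of_eq_zero {i : ℤ} (hb : b i = 0) : weightedTerm p c a b i = 0 := by
  simp [weightedTerm, hb]

lemma two_rpow_mul_le_half_two_rpow_mul_add_one (hp : 1 ≤ p) (x : ℝ) :
    (2:ℝ) ^ (p * x) ≤ 1 / 2 * (2:ℝ) ^ (p * (x + 1)) := by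
  have h2p : (2:ℝ) ≤ 2 ^ p := by
    simpa using Real.rpow_le_rpow_of_exponent_le one_le_two hp
  rw [mul_add, mul_one, Real.rpow_add two_pos]
  nlinarith [Real.rpow_pos_of_pos two_pos (p * x)]

lemma weightedTerm_succ_le_half (hanti : Antitone a) (hnonneg : ∀ i, 0 ≤ a i) (hc : c ≤ 0)
    (hp : 1 ≤ p) (i : ℤ) :
    weightedTerm p c a (fun j => a (j + 1)) i ≤ 1 / 2 * weightedTerm p c a a (i + 1) := by
  rcases (hnonneg i).eq_or_lt with hai | hai
  · have hai1 : a (i + 1) = 0 := le_antisymm (hai ▸ hanti (Int.le_add_one le_rfl)) (hnonneg _)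
    rw [weightedTerm_eq_zero_of_eq_zero (b := fun j => a (j + 1)) hai1]
    exact mul_nonneg one_half_pos.le (weightedTerm_nonneg hnonneg hnonneg _)
  have hle : a i ≤ a (i - 1) := hanti (by omega)
  have hprev : a (i - 1) ≠ 0 := (hai.trans_le hle).ne'
  have hrpow : a (i - 1) ^ c ≤ a i ^ c := Real.rpow_le_rpow_of_nonpos hai hle hc
  have hsucc :
      weightedTerm p c a a (i + 1) = (2:ℝ) ^ (p * ((i:ℝ) + 1)) * a i ^ c * a (i + 1) := by
    simp [weightedTerm, hai.ne']
  rw [hsucc, weightedTerm, if_pos hprev]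
  have := hnonneg (i + 1)
  calc (2:ℝ) ^ (p * (i:ℝ)) * a (i - 1) ^ c * a (i + 1)
      ≤ (2:ℝ) ^ (p * (i:ℝ)) * a i ^ c * a (i + 1) := by gcongr
    _ ≤ (1 / 2 * (2:ℝ) ^ (p * ((i:ℝ) + 1))) * a i ^ c * a (i + 1) := by
        gcongr
        exact two_rpow_mul_le_half_two_rpow_mul_add_one hp i
    _ = 1 / 2 * ((2:ℝ) ^ (p * ((i:ℝ) + 1)) * a i ^ c * a (i + 1)) := by ring

end weightedTerm

lemma Antitone.exists_pos_le_of_ne_zero {a : ℤ → ℝ} (hanti : Antitone a)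
    (hnonneg : ∀ i, 0 ≤ a i) {N : ℤ} (hvanish : ∀ i, N ≤ i → a i = 0) :
    ∃ δ > 0, ∀ i, a i ≠ 0 → δ ≤ a i := by
  by_cases hzero : ∀ i, a i = 0
  · exact ⟨1, one_pos, fun i hi => (hi (hzero i)).elim⟩
  obtain ⟨M, hM, hMmax⟩ := Int.exists_greatest_of_bdd
    ⟨N, fun i hi => by by_contra! h; exact hi (hvanish i h.le)⟩ (not_forall.mp hzero)
  exact ⟨a M, (hnonneg M).lt_of_ne' hM, fun i hi => hanti (hMmax i hi)⟩

lemma summable_of_nonneg_of_le_zpow_of_eq_zero {f : ℤ → ℝ} {C r : ℝ} {N : ℤ}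
    (hr : 1 < r) (hf : ∀ i, 0 ≤ f i) (hle : ∀ i, f i ≤ C * r ^ i)
    (hvanish : ∀ i, N ≤ i → f i = 0) : Summable f := by
  apply Summable.of_nat_of_neg
  · refine summable_of_ne_finset_zero (s := Finset.range N.toNat) fun m hm => hvanish _ ?_
    simp only [Finset.mem_range, not_lt] at hm
    omega
  · have hgeom : Summable fun m : ℕ => C * r⁻¹ ^ m :=
      (summable_geometric_of_lt_one (by positivity) (inv_lt_one_of_one_lt₀ hr)).mul_left C
    refine hgeom.of_nonneg_of_le (fun m => hf _) fun m => ?_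
    simpa [zpow_neg] using hle (-m)

lemma summable_weightedTerm {p c B : ℝ} {N : ℤ} {a : ℤ → ℝ} (hanti : Antitone a)
    (hnonneg : ∀ i, 0 ≤ a i) (hB : ∀ i, a i ≤ B) (hvanish : ∀ i, N ≤ i → a i = 0)
    (hc : c ≤ 0) (hp : 0 < p) : Summable (weightedTerm p c a a) := by
  obtain ⟨δ, hδ, hδle⟩ := hanti.exists_pos_le_of_ne_zero hnonneg hvanish
  have hB0 : 0 ≤ B := (hnonneg 0).trans (hB 0)
  refine summable_of_nonneg_of_le_zpow_of_eq_zero (C := δ ^ c * B) (r := 2 ^ p) (N := N)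
    (Real.one_lt_rpow one_lt_two hp) (weightedTerm_nonneg hnonneg hnonneg) (fun i => ?_)
    (fun i hi => weightedTerm_eq_zero_of_eq_zero (hvanish i hi))
  have hpow : (2:ℝ) ^ (p * (i:ℝ)) = ((2:ℝ) ^ p) ^ i := by
    rw [Real.rpow_mul zero_le_two, Real.rpow_intCast]
  unfold weightedTerm
  split_ifs with hprev
  · have := hnonneg i
    have := hB i
    have := Real.rpow_le_rpow_of_nonpos hδ (hδle _ hprev) hc
    rw [hpow]
    calc ((2:ℝ) ^ p) ^ i * a (i - 1) ^ c * a i ≤ ((2:ℝ) ^ p) ^ i * δ ^ c * B := by gcongr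
      _ = δ ^ c * B * ((2:ℝ) ^ p) ^ i := by ring
  · positivity

theorem discrete_shift_inequality_general
    (n : ℕ) (s p : ℝ) (hs : s ∈ Set.Ioo (0:ℝ) 1) (hp : 1 ≤ p)
    (N : ℤ) (a : ℤ → ℝ)
    (hbdd : ∃ B : ℝ, ∀ i : ℤ, a i ≤ B)
    (hnonneg : ∀ i : ℤ, 0 ≤ a i)
    (hmono : ∀ i : ℤ, a (i + 1) ≤ a i)
    (hvanish : ∀ i : ℤ, N ≤ i → a i = 0) :
    Summable (fun i : ℤ =>
        if a (i - 1) ≠ 0 then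
          (2:ℝ) ^ (p * (i:ℝ)) * a (i - 1) ^ (-(s * p) / (n:ℝ)) * a (i + 1) else 0)
    ∧ Summable (fun i : ℤ =>
        if a (i - 1) ≠ 0 then
          (2:ℝ) ^ (p * (i:ℝ)) * a (i - 1) ^ (-(s * p) / (n:ℝ)) * a i else 0)
    ∧ (∑' i : ℤ,
        if a (i - 1) ≠ 0 then
          (2:ℝ) ^ (p * (i:ℝ)) * a (i - 1) ^ (-(s * p) / (n:ℝ)) * a (i + 1) else 0)
        ≤ (1/2) * ∑' i : ℤ,
            if a (i - 1) ≠ 0 then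
              (2:ℝ) ^ (p * (i:ℝ)) * a (i - 1) ^ (-(s * p) / (n:ℝ)) * a i else 0 := by
  obtain ⟨B, hB⟩ := hbdd
  have hanti : Antitone a := antitone_int_of_succ_le hmono
  set c := -(s * p) / (n:ℝ)
  have hc : c ≤ 0 := div_nonpos_of_nonpos_of_nonneg (by nlinarith [hs.1]) n.cast_nonneg
  have hkey := weightedTerm_succ_le_half (p := p) hanti hnonneg hc hp
  have hg := summable_weightedTerm hanti hnonneg hB hvanish hc (zero_lt_one.trans_le hp)
  have hg_succ : Summable fun i => 1 / 2 * weightedTerm p c a a (i + 1) :=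
    ((Equiv.addRight (1:ℤ)).summable_iff.mpr hg).mul_left _
  have hf : Summable (weightedTerm p c a fun j => a (j + 1)) :=
    hg_succ.of_nonneg_of_le (weightedTerm_nonneg hnonneg fun j => hnonneg _) hkey
  refine ⟨hf, hg, ?_⟩
  calc ∑' i, weightedTerm p c a (fun j => a (j + 1)) i
      ≤ ∑' i, 1 / 2 * weightedTerm p c a a (i + 1) := hf.tsum_le_tsum hkey hg_succ
    _ = 1 / 2 * ∑' i, weightedTerm p c a a i := by
        rw [tsum_mul_left]
        exact congrArg _ ((Equiv.addRight (1:ℤ)).tsum_eq _)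

/-- Discrete inequality: for a bounded non-negative non-increasing sequence
`(a_i)_{i∈ℤ}` vanishing for `i ≥ N`,
`Σ_{a_{i-1} ≠ 0} 2^{pi} a_{i-1}^{-sp/n} a_{i+1} ≤ (1/2) Σ_{a_{i-1} ≠ 0} 2^{pi} a_{i-1}^{-sp/n} a_i`,
and both series converge. -/
theorem discrete_shift_inequality
    (n : ℕ) (hn : 1 ≤ n) (s p : ℝ) (hs : s ∈ Set.Ioo (0:ℝ) 1) (hp : 1 ≤ p)
    (hsp : s * p < n) (N : ℤ) (a : ℤ → ℝ)
    (hbdd : ∃ B : ℝ, ∀ i : ℤ, a i ≤ B)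
    (hnonneg : ∀ i : ℤ, 0 ≤ a i)
    (hmono : ∀ i : ℤ, a (i + 1) ≤ a i)
    (hvanish : ∀ i : ℤ, N ≤ i → a i = 0) :
    Summable (fun i : ℤ =>
        if a (i - 1) ≠ 0 then
          (2:ℝ) ^ (p * (i:ℝ)) * a (i - 1) ^ (-(s * p) / (n:ℝ)) * a (i + 1) else 0)
    ∧ Summable (fun i : ℤ =>
        if a (i - 1) ≠ 0 then
          (2:ℝ) ^ (p * (i:ℝ)) * a (i - 1) ^ (-(s * p) / (n:ℝ)) * a i else 0)
    ∧ (∑' i : ℤ,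
        if a (i - 1) ≠ 0 then
          (2:ℝ) ^ (p * (i:ℝ)) * a (i - 1) ^ (-(s * p) / (n:ℝ)) * a (i + 1) else 0)
        ≤ (1/2) * ∑' i : ℤ,
            if a (i - 1) ≠ 0 then
              (2:ℝ) ^ (p * (i:ℝ)) * a (i - 1) ^ (-(s * p) / (n:ℝ)) * a i else 0 :=
  discrete_shift_inequality_general n s p hs hp N a hbdd hnonneg hmono hvanish
end

section
/- Let n ≥ 1 be an integer, s ∈ (0,1), and p ≥ 1. Then there exists a constant C > 0, depending only on n, s, and p, such that for every open convex set Ω ⊂ ℝ^{n+1}, every x ∈ ∂Ω, and every R > 0, one has ∫_{∂Ω∖B_R(x)} |x − y|^{−(n+sp)} dy ≤ C · R^{−sp}. -/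
/-!
The nearest-point projection onto the closed convex set `closure Ω` is `1`-Lipschitz, and a point
`y ∈ ∂Ω` is the projection of every point of an outer normal ray at `y`. A bounded set `Q`
containing `y` is left by that ray through `∂Q`, so `∂Ω ∩ Q` lies in a `1`-Lipschitz image of `∂Q`
and `μH[n] (∂Ω ∩ Q) ≤ μH[n] (∂Q)`. For the cube `Q` of half-side `r` this gives
`μH[n] (∂Ω ∩ B_r(x)) ≤ M r^n`, and summing over the dyadic annuli `B_{2^{k+1}R} \ B_{2^k R}`
bounds the tail integral by a geometric series in `2^{-sp}` times `R^{-sp}`.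
-/

open MeasureTheory Set Filter Metric
open scoped ENNReal NNReal
open scoped RealInnerProductSpace

theorem exists_nonneg_add_smul_mem_frontier {F : Type*} [NormedAddCommGroup F] [NormedSpace ℝ F]
    {Q : Set F} (hQ : Bornology.IsBounded Q) {y : F} (hy : y ∈ Q) {ν : F} (hν : ν ≠ 0) :
    ∃ t : ℝ, 0 ≤ t ∧ y + t • ν ∈ frontier Q := by
  -- `|t|` keeps the whole line `t ↦ y + |t| • ν` on the ray, and `ℝ` is connected.
  set γ : ℝ → F := fun t => y + |t| • ν
  have hγ : Continuous γ := by fun_prop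
  obtain ⟨C, hC⟩ := hQ.subset_closedBall y
  have hT : (γ ⁻¹' Q).Nonempty ∧ γ ⁻¹' Q ≠ univ := by
    refine ⟨⟨0, by simpa [γ] using hy⟩, fun h => ?_⟩
    set t₀ := (|C| + 1) / ‖ν‖
    have hfar : dist (γ t₀) y = |C| + 1 := by
      have hC1 : 0 ≤ |C| + 1 := by positivity
      simp [γ, t₀, dist_eq_norm, norm_smul, abs_div, hν, abs_of_nonneg hC1]
    have hnear : dist (γ t₀) y ≤ C := hC (h.symm ▸ mem_univ t₀ : t₀ ∈ γ ⁻¹' Q)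
    linarith [le_abs_self C]
  obtain ⟨t, ht⟩ := nonempty_frontier_iff.2 hT
  exact ⟨|t|, abs_nonneg t, hγ.frontier_preimage_subset Q ht⟩

section Projection

variable {E : Type*} [NormedAddCommGroup E] [InnerProductSpace ℝ E]

theorem norm_sub_le_of_inner_le_zero {z z' a b : E} (ha : ⟪z - a, b - a⟫ ≤ 0)
    (hb : ⟪z' - b, a - b⟫ ≤ 0) : ‖a - b‖ ≤ ‖z - z'‖ := by
  have hsplit : ⟪z - z', a - b⟫ = ‖a - b‖ ^ 2 - ⟪z - a, b - a⟫ - ⟪z' - b, a - b⟫ := by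
    rw [← real_inner_self_eq_norm_sq]
    simp only [inner_sub_left, inner_sub_right, real_inner_comm]
    ring
  have hcs : ⟪z - z', a - b⟫ ≤ ‖z - z'‖ * ‖a - b‖ := real_inner_le_norm _ _
  nlinarith [norm_nonneg (a - b), norm_nonneg (z - z')]

theorem exists_nonexpansive_proj_of_isComplete_convex {K : Set E} (hne : K.Nonempty)
    (hK : IsComplete K) (hconv : Convex ℝ K) :
    ∃ P : E → E, LipschitzWith 1 P ∧
      ∀ z y, y ∈ K → (∀ w ∈ K, ⟪z - y, w - y⟫ ≤ 0) → P z = y := by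
  choose P hPK hPmin using exists_norm_eq_iInf_of_complete_convex hne hK hconv
  have hvar : ∀ z, ∀ w ∈ K, ⟪z - P z, w - P z⟫ ≤ 0 := fun z =>
    (norm_eq_iInf_iff_real_inner_le_zero hconv (hPK z)).1 (hPmin z)
  refine ⟨P, LipschitzWith.of_dist_le_mul fun z z' => ?_, fun z y hy hzy => ?_⟩
  · simpa [dist_eq_norm] using
      norm_sub_le_of_inner_le_zero (hvar z _ (hPK z')) (hvar z' _ (hPK z))
  · simpa [sub_eq_zero] using norm_sub_le_of_inner_le_zero (hvar z y hy) (hzy _ (hPK z))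

variable [CompleteSpace E]

theorem exists_ne_zero_forall_inner_sub_le_zero {Ω : Set E} (hΩ : IsOpen Ω)
    (hconv : Convex ℝ Ω) {y : E} (hy : y ∈ frontier Ω) :
    ∃ ν : E, ν ≠ 0 ∧ ∀ w ∈ closure Ω, ⟪ν, w - y⟫ ≤ 0 := by
  have hyΩ : y ∉ Ω := fun h => hy.2 (hΩ.interior_eq.symm ▸ h)
  obtain ⟨f, hf⟩ := geometric_hahn_banach_open_point hconv hΩ hyΩ
  obtain ⟨w₀, hw₀⟩ : Ω.Nonempty := closure_nonempty_iff.1 ⟨y, frontier_subset_closure hy⟩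
  refine ⟨(InnerProductSpace.toDual ℝ E).symm f, ?_, fun w hw => ?_⟩
  · rw [Ne, LinearIsometryEquiv.map_eq_zero_iff]
    rintro rfl
    exact (hf w₀ hw₀).false
  · have hle : f w ≤ f y :=
      closure_minimal (fun a ha => (hf a ha).le) (isClosed_le f.continuous continuous_const) hw
    rw [InnerProductSpace.toDual_symm_apply, map_sub]
    linarith

theorem frontier_inter_subset_image_frontier {Ω Q : Set E} (hΩ : IsOpen Ω) (hconv : Convex ℝ Ω)
    (hQ : Bornology.IsBounded Q) {P : E → E}
    (hP : ∀ z y, y ∈ closure Ω → (∀ w ∈ closure Ω, ⟪z - y, w - y⟫ ≤ 0) → P z = y) :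
    frontier Ω ∩ Q ⊆ P '' frontier Q := by
  rintro y ⟨hyΩ, hyQ⟩
  obtain ⟨ν, hν, hνΩ⟩ := exists_ne_zero_forall_inner_sub_le_zero hΩ hconv hyΩ
  obtain ⟨t, ht, htQ⟩ := exists_nonneg_add_smul_mem_frontier hQ hyQ hν
  refine ⟨y + t • ν, htQ, hP _ _ (frontier_subset_closure hyΩ) fun w hw => ?_⟩
  rw [add_sub_cancel_left, real_inner_smul_left]
  exact mul_nonpos_of_nonneg_of_nonpos ht (hνΩ w hw)

theorem hausdorffMeasure_frontier_inter_le [MeasurableSpace E] [BorelSpace E] {Ω Q : Set E}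
    (hΩ : IsOpen Ω) (hconv : Convex ℝ Ω) (hQ : Bornology.IsBounded Q) {d : ℝ} (hd : 0 ≤ d) :
    μH[d] (frontier Ω ∩ Q) ≤ μH[d] (frontier Q) := by
  rcases Ω.eq_empty_or_nonempty with rfl | hne
  · simp
  obtain ⟨P, hPlip, hP⟩ := exists_nonexpansive_proj_of_isComplete_convex hne.closure
    isClosed_closure.isComplete hconv.closure
  calc μH[d] (frontier Ω ∩ Q) ≤ μH[d] (P '' frontier Q) :=
        measure_mono (frontier_inter_subset_image_frontier hΩ hconv hQ hP)
    _ ≤ μH[d] (frontier Q) := by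
        simpa using hPlip.hausdorffMeasure_image_le hd (frontier Q)

end Projection

section PiSphere

variable {n : ℕ}

theorem sphere_subset_iUnion_image_insertNth (a : Fin (n + 1) → ℝ) (r : ℝ) :
    sphere a r ⊆ ⋃ i, ((fun w => a + Fin.insertNth i r w) '' closedBall 0 r ∪
      (fun w => a + Fin.insertNth i (-r) w) '' closedBall 0 r) := by
  intro u hu
  set v := u - a
  obtain ⟨i, hi⟩ := Finite.exists_max fun j => ‖v j‖
  have hvi : ‖v i‖ = r := by
    rw [← mem_sphere_iff_norm.1 hu]
    exact le_antisymm (norm_le_pi_norm v i) ((pi_norm_le_iff_of_nonneg (norm_nonneg _)).2 hi)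
  have hw : Fin.removeNth i v ∈ closedBall 0 r := by
    rw [mem_closedBall_zero_iff, ← hvi, pi_norm_le_iff_of_nonneg (norm_nonneg _)]
    exact fun j => hi _
  have hu_eq : u = a + Fin.insertNth i (v i) (Fin.removeNth i v) := by
    rw [Fin.insertNth_self_removeNth, add_sub_cancel]
  rw [Real.norm_eq_abs] at hvi
  refine mem_iUnion.2 ⟨i, ?_⟩
  rcases abs_eq (hvi ▸ abs_nonneg _) |>.1 hvi with h | h
  · exact Or.inl ⟨_, hw, by rw [hu_eq, h]⟩
  · exact Or.inr ⟨_, hw, by rw [hu_eq, h]⟩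

theorem hausdorffMeasure_pi_sphere_le (a : Fin (n + 1) → ℝ) {r : ℝ} (hr : 0 ≤ r) :
    μH[n] (sphere a r) ≤ 2 * (n + 1) * ENNReal.ofReal ((2 * r) ^ n) := by
  have hface : ∀ i c, μH[n] ((fun w => a + Fin.insertNth i c w) '' closedBall 0 r)
      = ENNReal.ofReal ((2 * r) ^ n) := by
    intro i c
    have hiso : Isometry fun w : Fin n → ℝ => a + Fin.insertNth i c w :=
      (isometry_add_left a).comp fun w w' => by
        simp [edist_dist, Fin.dist_insertNth_insertNth]
    rw [hiso.hausdorffMeasure_image (Or.inl (Nat.cast_nonneg n))]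
    have hμ : (μH[n] : Measure (Fin n → ℝ)) = volume := by
      simpa using hausdorffMeasure_pi_real (ι := Fin n)
    simpa [hμ] using Real.volume_pi_closedBall (0 : Fin n → ℝ) hr
  calc μH[n] (sphere a r)
      ≤ ∑ i, μH[n] ((fun w => a + Fin.insertNth i r w) '' closedBall 0 r ∪
          (fun w => a + Fin.insertNth i (-r) w) '' closedBall 0 r) := by
        refine (measure_mono (sphere_subset_iUnion_image_insertNth a r)).trans ?_
        exact measure_iUnion_fintype_le _ _
    _ ≤ ∑ _i : Fin (n + 1), 2 * ENNReal.ofReal ((2 * r) ^ n) := by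
        gcongr with i
        exact (measure_union_le _ _).trans (by rw [hface, hface, ← two_mul])
    _ = 2 * (n + 1) * ENNReal.ofReal ((2 * r) ^ n) := by
        simp only [Finset.sum_const, Finset.card_univ, Fintype.card_fin, nsmul_eq_mul, Nat.cast_add,
          Nat.cast_one]
        ring

end PiSphere

theorem exists_hausdorffMeasure_frontier_inter_ball_le (n : ℕ) :
    ∃ M : ℝ≥0∞, M ≠ ∞ ∧ ∀ Ω : Set (EuclideanSpace ℝ (Fin (n + 1))), IsOpen Ω → Convex ℝ Ω →
      ∀ x r, 0 ≤ r → μH[n] (frontier Ω ∩ ball x r) ≤ M * ENNReal.ofReal (r ^ (n : ℝ)) := by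
  set κ := (Fintype.card (Fin (n + 1)) : ℝ≥0) ^ (1 / (2 : ℝ≥0∞)).toReal
  refine ⟨(κ : ℝ≥0∞) ^ (n : ℝ) * (2 * (n + 1) * ENNReal.ofReal (2 ^ n)), by finiteness, ?_⟩
  intro Ω hΩ hconv x r hr
  -- the cube of half-side `r` about `x`, a closed ball for the sup norm
  set Q := WithLp.ofLp ⁻¹' closedBall (WithLp.ofLp x) r
  have hball : ball x r ⊆ Q := fun z hz =>
    ((PiLp.lipschitzWith_ofLp 2 _).dist_le_mul z x).trans (by simpa using (mem_ball.1 hz).le)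
  have hQ : Bornology.IsBounded Q :=
    (PiLp.antilipschitzWith_ofLp 2 _).isBounded_preimage isBounded_closedBall
  have hfrontier : frontier Q ⊆ WithLp.toLp 2 '' sphere (WithLp.ofLp x) r := fun z hz =>
    ⟨WithLp.ofLp z, frontier_closedBall_subset_sphere
      ((PiLp.continuous_ofLp 2 _).frontier_preimage_subset _ hz), WithLp.toLp_ofLp _ z⟩
  calc μH[n] (frontier Ω ∩ ball x r) ≤ μH[n] (frontier Ω ∩ Q) :=
        measure_mono (inter_subset_inter_right _ hball)
    _ ≤ μH[n] (frontier Q) := hausdorffMeasure_frontier_inter_le hΩ hconv hQ (Nat.cast_nonneg n)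
    _ ≤ μH[n] (WithLp.toLp 2 '' sphere (WithLp.ofLp x) r) := measure_mono hfrontier
    _ ≤ (κ : ℝ≥0∞) ^ (n : ℝ) * μH[n] (sphere (WithLp.ofLp x) r) :=
        (PiLp.lipschitzWith_toLp 2 _).hausdorffMeasure_image_le (Nat.cast_nonneg n) _
    _ ≤ (κ : ℝ≥0∞) ^ (n : ℝ) * (2 * (n + 1) * ENNReal.ofReal ((2 * r) ^ n)) := by
        gcongr
        exact hausdorffMeasure_pi_sphere_le _ hr
    _ = _ := by
        rw [mul_pow, ENNReal.ofReal_mul (by positivity), Real.rpow_natCast]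
        ring

section Tail

variable {X : Type*} [PseudoMetricSpace X]

theorem compl_ball_subset_iUnion_annulus (x : X) {R : ℝ} (hR : 0 < R) :
    (ball x R)ᶜ ⊆ ⋃ k : ℕ, ball x (2 ^ (k + 1) * R) \ ball x (2 ^ k * R) := by
  intro y hy
  have hRy : 1 ≤ dist y x / R := (one_le_div hR).2 (not_lt.1 hy)
  obtain ⟨k, hk, hk'⟩ := exists_nat_pow_near hRy one_lt_two
  refine mem_iUnion.2 ⟨k, mem_ball.2 ?_, fun h => (mem_ball.1 h).not_ge ?_⟩
  · rwa [div_lt_iff₀ hR] at hk'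
  · rwa [le_div_iff₀ hR] at hk

theorem rpow_neg_add_mul_rpow_two_pow_succ {d a R : ℝ} (hR : 0 < R) (k : ℕ) :
    (2 ^ k * R) ^ (-(d + a)) * (2 ^ (k + 1) * R) ^ d = 2 ^ d * (2 ^ (-a)) ^ k * R ^ (-a) := by
  have hB : 0 < 2 ^ k * R := by positivity
  have hdouble : (2 : ℝ) ^ (k + 1) * R = 2 * (2 ^ k * R) := by ring
  rw [hdouble, Real.mul_rpow zero_le_two hB.le, mul_left_comm, ← Real.rpow_add hB,
    show -(d + a) + d = -a by ring, Real.mul_rpow (by positivity) hR.le,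
    ← Real.rpow_pow_comm zero_le_two, mul_assoc]

variable [MeasurableSpace X]

theorem lintegral_compl_ball_rpow_le (μ : Measure X) (x : X) {M : ℝ≥0∞} {d a : ℝ} (hd : 0 ≤ d)
    (ha : 0 < a) (hμ : ∀ ρ, 0 < ρ → μ (ball x ρ) ≤ M * ENNReal.ofReal (ρ ^ d)) {R : ℝ}
    (hR : 0 < R) :
    ∫⁻ y in (ball x R)ᶜ, ENNReal.ofReal (dist x y ^ (-(d + a))) ∂μ ≤
      M * ENNReal.ofReal (2 ^ d) * (1 - ENNReal.ofReal (2 ^ (-a)))⁻¹ *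
        ENNReal.ofReal (R ^ (-a)) := by
  set q := ENNReal.ofReal (2 ^ (-a))
  have hannulus : ∀ k : ℕ, ∫⁻ y in ball x (2 ^ (k + 1) * R) \ ball x (2 ^ k * R),
      ENNReal.ofReal (dist x y ^ (-(d + a))) ∂μ ≤
        M * ENNReal.ofReal (2 ^ d) * ENNReal.ofReal (R ^ (-a)) * q ^ k := by
    intro k
    have hk : 0 < 2 ^ k * R := by positivity
    calc ∫⁻ y in ball x (2 ^ (k + 1) * R) \ ball x (2 ^ k * R),
          ENNReal.ofReal (dist x y ^ (-(d + a))) ∂μ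
        ≤ ∫⁻ _ in ball x (2 ^ (k + 1) * R) \ ball x (2 ^ k * R),
          ENNReal.ofReal ((2 ^ k * R) ^ (-(d + a))) ∂μ := by
          refine setLIntegral_mono measurable_const fun y hy => ENNReal.ofReal_le_ofReal ?_
          refine Real.rpow_le_rpow_of_nonpos hk ?_ (by linarith)
          simpa [dist_comm] using hy.2
      _ ≤ ENNReal.ofReal ((2 ^ k * R) ^ (-(d + a))) * μ (ball x (2 ^ (k + 1) * R)) := by
          rw [setLIntegral_const]
          exact mul_le_mul_right (measure_mono sdiff_subset) _
      _ ≤ ENNReal.ofReal ((2 ^ k * R) ^ (-(d + a))) *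
            (M * ENNReal.ofReal ((2 ^ (k + 1) * R) ^ d)) := by
          gcongr
          exact hμ _ (by positivity)
      _ = M * ENNReal.ofReal (2 ^ d) * ENNReal.ofReal (R ^ (-a)) * q ^ k := by
          rw [mul_left_comm, ← ENNReal.ofReal_mul (by positivity),
            rpow_neg_add_mul_rpow_two_pow_succ hR, ENNReal.ofReal_mul (by positivity),
            ENNReal.ofReal_mul (by positivity), ENNReal.ofReal_pow (by positivity)]
          ring
  calc ∫⁻ y in (ball x R)ᶜ, ENNReal.ofReal (dist x y ^ (-(d + a))) ∂μ
      ≤ ∑' k : ℕ, ∫⁻ y in ball x (2 ^ (k + 1) * R) \ ball x (2 ^ k * R),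
          ENNReal.ofReal (dist x y ^ (-(d + a))) ∂μ :=
        (lintegral_mono_set (compl_ball_subset_iUnion_annulus x hR)).trans
          (lintegral_iUnion_le _ _)
    _ ≤ ∑' k : ℕ, M * ENNReal.ofReal (2 ^ d) * ENNReal.ofReal (R ^ (-a)) * q ^ k :=
        ENNReal.tsum_le_tsum hannulus
    _ = _ := by
        rw [ENNReal.tsum_mul_left, ENNReal.tsum_geometric]
        ring

end Tail

theorem convex_boundary_tail_estimate_general
    (n : ℕ) (s p : ℝ) (hs : s ∈ Set.Ioo (0:ℝ) 1) (hp : 1 ≤ p) :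
    ∃ C : ℝ, 0 < C ∧
      ∀ (Ω : Set (EuclideanSpace ℝ (Fin (n+1)))), IsOpen Ω → Convex ℝ Ω →
      ∀ x ∈ frontier Ω, ∀ R : ℝ, 0 < R →
        (∫⁻ y in frontier Ω \ ball x R,
            ENNReal.ofReal (dist x y ^ (-((n:ℝ) + s * p))) ∂μH[(n:ℝ)])
          ≤ ENNReal.ofReal (C * R ^ (-(s * p))) := by
  obtain ⟨M, hM, hball⟩ := exists_hausdorffMeasure_frontier_inter_ball_le n
  have hsp : 0 < s * p := mul_pos hs.1 (zero_lt_one.trans_le hp)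
  set K := M * ENNReal.ofReal (2 ^ (n : ℝ)) * (1 - ENNReal.ofReal (2 ^ (-(s * p))))⁻¹
  have hK : K ≠ ∞ := by
    have hq : ENNReal.ofReal (2 ^ (-(s * p))) < 1 := ENNReal.ofReal_lt_one.2
      (Real.rpow_lt_one_of_one_lt_of_neg one_lt_two (neg_neg_of_pos hsp))
    exact ENNReal.mul_ne_top (by finiteness) (ENNReal.inv_ne_top.2 (tsub_pos_of_lt hq).ne')
  refine ⟨K.toReal + 1, by positivity, fun Ω hΩ hconv x _ R hR => ?_⟩
  rw [sdiff_eq, inter_comm, ← Measure.restrict_restrict measurableSet_ball.compl]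
  calc _ ≤ K * ENNReal.ofReal (R ^ (-(s * p))) :=
        lintegral_compl_ball_rpow_le _ x (Nat.cast_nonneg n) hsp (fun ρ hρ => by
          rw [Measure.restrict_apply measurableSet_ball, inter_comm]
          exact hball Ω hΩ hconv x ρ hρ.le) hR
    _ = ENNReal.ofReal (K.toReal * R ^ (-(s * p))) := by
        rw [ENNReal.ofReal_mul ENNReal.toReal_nonneg, ENNReal.ofReal_toReal hK]
    _ ≤ ENNReal.ofReal ((K.toReal + 1) * R ^ (-(s * p))) := by
        gcongr
        linarith

/-- Tail estimate for the nonlocal kernel on the boundary of a convex set: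
`∫_{∂Ω∖B_R(x)} |x-y|^{-(n+sp)} dy ≤ C R^{-sp}`. -/
theorem convex_boundary_tail_estimate
    (n : ℕ) (hn : 1 ≤ n) (s p : ℝ) (hs : s ∈ Set.Ioo (0:ℝ) 1) (hp : 1 ≤ p) :
    ∃ C : ℝ, 0 < C ∧
      ∀ (Ω : Set (EuclideanSpace ℝ (Fin (n+1)))), IsOpen Ω → Convex ℝ Ω →
      ∀ x ∈ frontier Ω, ∀ R : ℝ, 0 < R →
        (∫⁻ y in frontier Ω \ ball x R,
            ENNReal.ofReal (dist x y ^ (-((n:ℝ) + s * p))) ∂μH[(n:ℝ)])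
          ≤ ENNReal.ofReal (C * R ^ (-(s * p))) :=
  convex_boundary_tail_estimate_general n s p hs hp
end
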